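/- (Instability of the symmetric equilibrium for long shelf life.) Let D ≥ 4 be an integer and τ = 10, α = 1. Let ỹ = (1/(τ(D+1)))·W(τ²(D+1)) be the symmetric equilibrium effort in a D-regular graph. Then W(τ²·e^{-τỹ}) > 1/(D-1); equivalently, D²·(W(τ²e^{-τỹ})/(1 + W(τ²e^{-τỹ})))² > 1, so the linearized two-step best-response map amplifies perturbations. -/

import Mathlib

/-- The Lambert W function on `[0,∞)`: the inverse of `x ↦ x * exp x` on `[0,∞)`. -/
noncomputable def lambertW (x : ℝ) : ℝ :=
  Function.invFunOn (fun t => t * Real.exp t) (Set.Ici 0) x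

/-!
With `τ = 10` and `L = W(τ²(D+1))` we have `τỹ = L/(D+1)`. Since `τ²(D+1) ≤ 2(D+1)e^{2(D+1)}`,
`L ≤ 2(D+1)`, so `τ²e^{-τỹ} ≥ 100e^{-2} ≥ e` and hence `W(τ²e^{-τỹ}) ≥ W(e) = 1 > 1/(D-1)`.
Finally `w > 1/(d-1)` rearranges to `d·w/(1+w) > 1`, which squares to the amplification bound.
-/

open Real Set

theorem strictMonoOn_mul_exp : StrictMonoOn (fun t : ℝ => t * exp t) (Ici 0) :=
  fun _ _ _ hb hab => mul_lt_mul hab (exp_le_exp.mpr hab.le) (exp_pos _) hb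

theorem exists_mul_exp_eq {x : ℝ} (hx : 0 ≤ x) : ∃ t ∈ Ici (0 : ℝ), t * exp t = x := by
  have hcont : ContinuousOn (fun t : ℝ => t * exp t) (Icc 0 x) := by fun_prop
  have hx_mem : x ∈ Icc (0 * exp 0) (x * exp x) :=
    ⟨by simpa using hx, le_mul_of_one_le_right hx (one_le_exp hx)⟩
  obtain ⟨t, ht, hteq⟩ := intermediate_value_Icc hx hcont hx_mem
  exact ⟨t, ht.1, hteq⟩

theorem lambertW_nonneg {x : ℝ} (hx : 0 ≤ x) : 0 ≤ lambertW x :=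
  Function.invFunOn_mem (exists_mul_exp_eq hx)

theorem lambertW_mul_exp_lambertW {x : ℝ} (hx : 0 ≤ x) : lambertW x * exp (lambertW x) = x :=
  Function.invFunOn_eq (exists_mul_exp_eq hx)

theorem lambertW_le_iff {x a : ℝ} (hx : 0 ≤ x) (ha : 0 ≤ a) :
    lambertW x ≤ a ↔ x ≤ a * exp a := by
  conv_rhs => rw [← lambertW_mul_exp_lambertW hx]
  exact (strictMonoOn_mul_exp.le_iff_le (lambertW_nonneg hx) ha).symm

theorem le_lambertW_iff {x a : ℝ} (hx : 0 ≤ x) (ha : 0 ≤ a) :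
    a ≤ lambertW x ↔ a * exp a ≤ x := by
  conv_rhs => rw [← lambertW_mul_exp_lambertW hx]
  exact (strictMonoOn_mul_exp.le_iff_le ha (lambertW_nonneg hx)).symm

theorem one_lt_sq_mul_div_one_add_sq {d w : ℝ} (hd : 1 < d) (hw : 1 / (d - 1) < w) :
    1 < d ^ 2 * (w / (1 + w)) ^ 2 := by
  have hw0 : 0 < w := (one_div_pos.mpr (sub_pos.mpr hd)).trans hw
  have hgain : 1 < d * (w / (1 + w)) := by
    rw [div_lt_iff₀ (sub_pos.mpr hd)] at hw
    rw [mul_div_assoc', one_lt_div (by positivity)]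
    linarith
  rw [← mul_pow]
  exact one_lt_pow₀ hgain two_ne_zero

theorem exp_three_lt_hundred : exp 3 < 100 := by
  have h : exp 3 = exp 1 ^ 3 := by rw [← exp_nat_mul]; norm_num
  rw [h]
  calc exp 1 ^ 3 < 2.7182818286 ^ 3 := by gcongr; exact exp_one_lt_d9
    _ < 100 := by norm_num

/-- Instability of the symmetric equilibrium for long shelf life: for D ≥ 4, τ = 10, α = 1,
with `ỹ = (1/(τ(D+1))) W(τ²(D+1))`, we have `W(τ²e^{-τỹ}) > 1/(D-1)`, equivalently
`D²·(W(τ²e^{-τỹ})/(1+W(τ²e^{-τỹ})))² > 1`. -/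
theorem symmetric_equilibrium_unstable (D : ℕ) (hD : 4 ≤ D) :
    let τ : ℝ := 10
    let yt : ℝ := (1 / (τ * ((D : ℝ) + 1))) * lambertW (τ ^ 2 * ((D : ℝ) + 1))
    let w : ℝ := lambertW (τ ^ 2 * Real.exp (-τ * yt))
    1 / ((D : ℝ) - 1) < w ∧ 1 < (D : ℝ) ^ 2 * (w / (1 + w)) ^ 2 := by
  intro τ yt w
  have hD' : (4 : ℝ) ≤ D := by exact_mod_cast hD
  set L := lambertW (τ ^ 2 * ((D : ℝ) + 1))
  have hL : L ≤ 2 * ((D : ℝ) + 1) := by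
    refine (lambertW_le_iff (by positivity) (by positivity)).mpr ?_
    nlinarith [quadratic_le_exp_of_nonneg (show (0 : ℝ) ≤ 2 * ((D : ℝ) + 1) by positivity)]
  have hτyt : τ * yt ≤ 2 := by
    have h : τ * yt = L / ((D : ℝ) + 1) := by
      show (10 : ℝ) * (1 / (10 * ((D : ℝ) + 1)) * L) = L / ((D : ℝ) + 1)
      field_simp
    rw [h, div_le_iff₀ (by positivity)]
    exact hL
  have hw : 1 ≤ w := by
    refine (le_lambertW_iff (by positivity) zero_le_one).mpr ?_
    calc 1 * exp 1 = exp 3 * exp (-2) := by rw [one_mul, ← exp_add]; norm_num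
      _ ≤ 100 * exp (-2) := by gcongr; exact exp_three_lt_hundred.le
      _ ≤ τ ^ 2 * exp (-τ * yt) := by norm_num [τ]; gcongr
  have hunstable : 1 / ((D : ℝ) - 1) < w :=
    calc 1 / ((D : ℝ) - 1) ≤ 1 / 3 := one_div_le_one_div_of_le (by norm_num) (by linarith)
      _ < 1 := by norm_num
      _ ≤ w := hw
  exact ⟨hunstable, one_lt_sq_mul_div_one_add_sq (by linarith) hunstable⟩
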